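/- (Growth lemma) Let {A(k)}_{k≥0} be a sequence of real numbers with A(0) = 0 such that for each k ≥ 1, 2A(k) − A(k−1) − A(k+1) ≤ C·exp(−A(k)) for some constant C > 0. Then either A(k) ≤ 2·log(k·√(C/2) + 1) for every k ≥ 0, or liminf_{k→∞} A(k)/k > 0. -/

import Mathlib

/-!
Compare `A` with the explicit barrier `B k = 2 log (k b + 1)`, `b = √(C/2)`, which satisfies the
reverse inequality `2B(k) − B(k−1) − B(k+1) ≥ C exp(−B(k))` because `log (1 − t) ≤ −t`.
If `A ≤ B` fails, take the first crossing `A(p) ≤ B(p)`, `A(p+1) > B(p+1)`. Since `x ↦ C exp(−x)`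
is decreasing, `D = A − B` is convex wherever it is nonnegative, so from the crossing on its
increments never drop below `δ = D(p+1) − D(p) > 0`, and `A ≥ D` grows at least linearly.
-/

open Filter Topology

lemma exists_crossing {f g : ℕ → ℝ} (h0 : f 0 ≤ g 0) (h : ¬∀ k, f k ≤ g k) :
    ∃ p, f p ≤ g p ∧ g (p + 1) < f (p + 1) := by
  by_contra! hstep
  exact h fun n => Nat.rec h0 (fun n ih => hstep n ih) n

lemma add_mul_le_of_convex_of_nonneg {D : ℕ → ℝ} {δ : ℝ} (hδ : 0 ≤ δ)
    (hconv : ∀ k, 0 ≤ D (k + 1) → D (k + 1) - D k ≤ D (k + 2) - D (k + 1))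
    {m : ℕ} (hm : 0 ≤ D (m + 1)) (hstep : δ ≤ D (m + 1) - D m) (n : ℕ) :
    D (m + 1) + n * δ ≤ D (m + 1 + n) := by
  suffices h : D (m + 1) + n * δ ≤ D (m + 1 + n) ∧ δ ≤ D (m + 1 + n) - D (m + n) from h.1
  induction n with
  | zero => simpa using hstep
  | succ n ih =>
    obtain ⟨hgrow, hincr⟩ := ih
    have hnonneg : 0 ≤ D (m + n + 1) := by
      rw [add_right_comm]; nlinarith [(Nat.cast_nonneg n : (0 : ℝ) ≤ n)]
    have hnext := hconv (m + n) hnonneg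
    rw [show m + 1 + n = m + n + 1 by ring] at hgrow hincr
    rw [show m + 1 + (n + 1) = m + n + 2 by ring, show m + (n + 1) = m + n + 1 by ring]
    push_cast
    constructor <;> linarith

lemma sub_increment_le_of_antitone {f : ℝ → ℝ} (hf : Antitone f) {A B : ℕ → ℝ}
    (hA : ∀ k, 2 * A (k + 1) - A k - A (k + 2) ≤ f (A (k + 1)))
    (hB : ∀ k, f (B (k + 1)) ≤ 2 * B (k + 1) - B k - B (k + 2))
    (k : ℕ) (hk : 0 ≤ A (k + 1) - B (k + 1)) :
    (A (k + 1) - B (k + 1)) - (A k - B k) ≤ (A (k + 2) - B (k + 2)) - (A (k + 1) - B (k + 1)) := by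
  have hfAB : f (A (k + 1)) ≤ f (B (k + 1)) := hf (by linarith)
  linarith [hA k, hB k]

lemma sq_div_sq_le_two_mul_log_sub_log_sub_log {b x : ℝ} (hbx : |b| < x) :
    b ^ 2 / x ^ 2 ≤ 2 * Real.log x - Real.log (x - b) - Real.log (x + b) := by
  obtain ⟨hxb₁, hxb₂⟩ := abs_lt.mp hbx
  have hx : 0 < x := (abs_nonneg b).trans_lt hbx
  have hsub : 0 < x - b := by linarith
  have hadd : 0 < x + b := by linarith
  have hlog : Real.log ((x - b) * (x + b) / x ^ 2) =
      Real.log (x - b) + Real.log (x + b) - 2 * Real.log x := by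
    rw [Real.log_div (by positivity) (by positivity), Real.log_mul hsub.ne' hadd.ne',
      Real.log_pow]
    push_cast; ring
  have hle := Real.log_le_sub_one_of_pos (show 0 < (x - b) * (x + b) / x ^ 2 by positivity)
  have hrat : (x - b) * (x + b) / x ^ 2 - 1 = -(b ^ 2 / x ^ 2) := by field_simp; ring
  linarith

noncomputable def logBarrier (b : ℝ) (k : ℕ) : ℝ := 2 * Real.log (k * b + 1)

lemma logBarrier_zero (b : ℝ) : logBarrier b 0 = 0 := by simp [logBarrier]

lemma logBarrier_nonneg {b : ℝ} (hb : 0 ≤ b) (k : ℕ) : 0 ≤ logBarrier b k := by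
  have : 1 ≤ (k : ℝ) * b + 1 := by nlinarith [(Nat.cast_nonneg k : (0 : ℝ) ≤ k)]
  exact mul_nonneg zero_le_two (Real.log_nonneg this)

lemma logBarrier_supersolution {b : ℝ} (hb : 0 ≤ b) (k : ℕ) :
    2 * b ^ 2 * Real.exp (-logBarrier b (k + 1)) ≤
      2 * logBarrier b (k + 1) - logBarrier b k - logBarrier b (k + 2) := by
  set x : ℝ := (k + 1) * b + 1
  have hbx : |b| < x := by
    rw [abs_of_nonneg hb]; nlinarith [(Nat.cast_nonneg k : (0 : ℝ) ≤ k)]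
  have hx : 0 < x := (abs_nonneg b).trans_lt hbx
  have hexp : Real.exp (-logBarrier b (k + 1)) = 1 / x ^ 2 := by
    have hlog : 2 * Real.log x = Real.log (x ^ 2) := by rw [Real.log_pow]; push_cast; ring
    rw [logBarrier, Real.exp_neg]
    push_cast
    rw [hlog, Real.exp_log (by positivity), one_div]
  have hkey := sq_div_sq_le_two_mul_log_sub_log_sub_log hbx
  have hsub : x - b = k * b + 1 := by ring
  have hadd : x + b = (↑(k + 2) : ℝ) * b + 1 := by push_cast; ring
  rw [hsub, hadd] at hkey
  rw [hexp]
  simp only [logBarrier]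
  push_cast at hkey ⊢
  have : 2 * b ^ 2 * (1 / x ^ 2) = 2 * (b ^ 2 / x ^ 2) := by ring
  linarith

lemma zero_lt_liminf_div_of_linear_lower_bound {A : ℕ → ℝ} {δ : ℝ} (hδ : 0 < δ) {N : ℕ}
    (h : ∀ n : ℕ, n * δ ≤ A (N + n)) :
    (0 : EReal) < liminf (fun k : ℕ => ((A k / (k : ℝ) : ℝ) : EReal)) atTop := by
  have hbound : ∀ k ≥ 2 * N + 1, δ / 2 ≤ A k / k := by
    intro k hk
    obtain ⟨n, rfl⟩ : ∃ n, k = N + n := ⟨k - N, by omega⟩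
    have hn : (N : ℝ) + 1 ≤ n := by exact_mod_cast (by omega : N + 1 ≤ n)
    rw [le_div_iff₀ (by exact_mod_cast (by omega : 0 < N + n))]
    push_cast
    nlinarith [h n]
  calc (0 : EReal) < ((δ / 2 : ℝ) : EReal) := by exact_mod_cast half_pos hδ
    _ ≤ _ := by
      refine le_liminf_of_le (by isBoundedDefault) ?_
      filter_upwards [eventually_ge_atTop (2 * N + 1)] with k hk
      exact_mod_cast hbound k hk

theorem growth_lemma (A : ℕ → ℝ) (C : ℝ) (hC : 0 < C) (hA0 : A 0 = 0)
    (hrec : ∀ k : ℕ, 1 ≤ k → 2 * A k - A (k - 1) - A (k + 1) ≤ C * Real.exp (-A k)) :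
    (∀ k : ℕ, A k ≤ 2 * Real.log ((k : ℝ) * Real.sqrt (C / 2) + 1)) ∨
      (0 : EReal) < liminf (fun k : ℕ => ((A k / (k : ℝ) : ℝ) : EReal)) atTop := by
  set b := Real.sqrt (C / 2)
  have hb : 0 ≤ b := Real.sqrt_nonneg _
  have hCb : C = 2 * b ^ 2 := by rw [Real.sq_sqrt (by positivity)]; ring
  set B := logBarrier b
  refine or_iff_not_imp_left.mpr fun hAB => ?_
  obtain ⟨p, hp, hp1⟩ := exists_crossing (f := A) (g := B) (by simp [B, hA0, logBarrier_zero]) hAB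
  have hsub : ∀ k, 2 * A (k + 1) - A k - A (k + 2) ≤ C * Real.exp (-A (k + 1)) := fun k => by
    simpa using hrec (k + 1) k.succ_pos
  have hconv := sub_increment_le_of_antitone
    (fun x y hxy => mul_le_mul_of_nonneg_left (Real.exp_le_exp.mpr (neg_le_neg hxy)) hC.le) hsub
    (fun k => hCb ▸ logBarrier_supersolution hb k)
  have hlin := add_mul_le_of_convex_of_nonneg (D := fun k => A k - B k) (by linarith) hconv
    (m := p) (by linarith) le_rfl
  refine zero_lt_liminf_div_of_linear_lower_bound (δ := (A (p + 1) - B (p + 1)) - (A p - B p))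
    (N := p + 1) (by linarith) fun n => ?_
  linarith [hlin n, logBarrier_nonneg hb (p + 1 + n)]
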